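/- Let G be a graph, u,v non-adjacent, and suppose S_a, S_b are uv-separators with |S_a| = |S_b| = k and there exists a (k+1)-TAR reconfiguration sequence ⟨S₁ = S_a, …, S_ℓ = S_b⟩ (consecutive symmetric difference 1, all sizes ≤ k+1). Then there exists such a sequence in which |S_i| ≥ k for all i, with |S_i| = k exactly when i is odd and |S_i| = k+1 exactly when i is even. -/

import Mathlib

/-!
Call two `k`-separators *swap-adjacent* if one arises from the other by exchanging a single
vertex; their union is then a `(k+1)`-separator one TAR step away from each, so a swap path
from `Sa` to `Sb` interleaved with these unions is a TAR sequence of the required shape.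

To get a swap path from a TAR sequence `A₀ = Sa, A₁, …, Aₙ = Sb`, walk along it while
maintaining a `k`-separator `C`, reachable from `Sa` by swaps, with `Aᵢ ⊆ C ∪ {x}` for some
vertex `x`. If `|Aᵢ| ≤ k`, at most one swap makes `Aᵢ ⊆ C`, and then `Aᵢ₊₁ ⊆ C ∪ {z}`.
If `|Aᵢ| = k + 1`, then `Aᵢ = C ∪ {x}` and the next step must delete a vertex, so
`Aᵢ₊₁ ⊆ C ∪ {x}` still. At the end `Sb ⊆ C` after at most one more swap, and `C = Sb`.
-/

/-- `S` is a `uv`-separator in `G`. -/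
def IsSep {V : Type*} (G : SimpleGraph V) (u v : V) (S : Set V) : Prop :=
  u ∉ S ∧ v ∉ S ∧ ∀ p : G.Walk u v, ∃ w ∈ S, w ∈ p.support

open Relation

section SetLemmas

variable {α : Type*} {A B : Set α}

lemma Set.ncard_symmDiff_of_subset [Finite α] (h : A ⊆ B) :
    (symmDiff A B).ncard = B.ncard - A.ncard := by
  rw [symmDiff_of_le h, Set.ncard_sdiff h]

lemma Set.exists_subset_insert_of_ncard_symmDiff_eq_one (h : (symmDiff A B).ncard = 1) :
    ∃ z, B ⊆ insert z A := by
  obtain ⟨z, hz⟩ := Set.ncard_eq_one.mp h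
  refine ⟨z, fun b hb => ?_⟩
  by_cases hbA : b ∈ A
  · exact Set.mem_insert_of_mem z hbA
  · exact Set.mem_insert_iff.mpr (.inl (hz ▸ Or.inr ⟨hb, hbA⟩ : b ∈ ({z} : Set α)))

lemma Set.subset_of_ncard_symmDiff_eq_one [Finite α] (h : (symmDiff A B).ncard = 1)
    (hBA : B.ncard ≤ A.ncard) : B ⊆ A := by
  obtain ⟨z, hz⟩ := Set.ncard_eq_one.mp h
  have hmem : ∀ w ∈ symmDiff A B, w = z := fun w hw => by rwa [hz] at hw
  intro b hb
  by_contra hbA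
  obtain rfl := hmem b (.inr ⟨hb, hbA⟩)
  have hAB : A ⊂ B := Set.ssubset_iff_subset_ne.mpr
    ⟨fun a ha => by_contra fun haB => hbA (hmem a (.inl ⟨ha, haB⟩) ▸ ha), fun hAB => hbA (hAB ▸ hb)⟩
  exact (Set.ncard_lt_ncard hAB).not_ge hBA

end SetLemmas

section Sequences

variable {α : Type*} {r : α → α → Prop}

lemma Relation.reflTransGen_of_forall_lt {n : ℕ} {f : ℕ → α}
    (h : ∀ i < n, r (f i) (f (i + 1))) : ReflTransGen r (f 0) (f n) :=
  (reflTransGen_of_succ_of_le (fun i j => r (f i) (f j))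
    (fun i hi => h i hi.2) (Nat.zero_le n)).lift f fun _ _ => id

lemma Relation.ReflTransGen.exists_forall_lt {a b : α} (h : ReflTransGen r a b) :
    ∃ (n : ℕ) (f : ℕ → α), f 0 = a ∧ f n = b ∧ ∀ i < n, r (f i) (f (i + 1)) := by
  induction h using Relation.ReflTransGen.head_induction_on with
  | refl => exact ⟨0, fun _ => b, rfl, rfl, fun _ h => absurd h (Nat.not_lt_zero _)⟩
  | @head a c hac _ ih =>
    obtain ⟨n, f, hf0, hfn, hf⟩ := ih
    refine ⟨n + 1, fun | 0 => a | i + 1 => f i, rfl, hfn, fun i hi => ?_⟩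
    cases i with
    | zero => show r a (f 0); rwa [hf0]
    | succ i => exact hf i (by omega)

end Sequences

section Separators

variable {V : Type*} {G : SimpleGraph V} {u v : V}

lemma IsSep.mono {S T : Set V} (hS : IsSep G u v S) (hST : S ⊆ T) (hu : u ∉ T) (hv : v ∉ T) :
    IsSep G u v T :=
  ⟨hu, hv, fun p => (hS.2.2 p).imp fun _ ⟨hw, hwp⟩ => ⟨hST hw, hwp⟩⟩

lemma IsSep.union {S T : Set V} (hS : IsSep G u v S) (hT : IsSep G u v T) :
    IsSep G u v (S ∪ T) :=
  hS.mono Set.subset_union_left (fun h => h.elim hS.1 hT.1) (fun h => h.elim hS.2.1 hT.2.1)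

lemma IsSep.of_subset_of_subset {S T U : Set V} (hS : IsSep G u v S) (hU : IsSep G u v U)
    (hST : S ⊆ T) (hTU : T ⊆ U) : IsSep G u v T :=
  hS.mono hST (fun h => hU.1 (hTU h)) (fun h => hU.2.1 (hTU h))

structure IsTARStep (G : SimpleGraph V) (u v : V) (k : ℕ) (A B : Set V) : Prop where
  isSep_left : IsSep G u v A
  isSep_right : IsSep G u v B
  ncard_left_le : A.ncard ≤ k + 1
  ncard_right_le : B.ncard ≤ k + 1
  ncard_symmDiff : (symmDiff A B).ncard = 1

/-- For `k`-sets, `|C ∪ D| = k + 1` says `D = (C \ {y}) ∪ {x}` with `y ∈ C`, `x ∉ C`. -/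
structure IsSepSwap (G : SimpleGraph V) (u v : V) (k : ℕ) (C D : Set V) : Prop where
  isSep_left : IsSep G u v C
  isSep_right : IsSep G u v D
  ncard_left : C.ncard = k
  ncard_right : D.ncard = k
  ncard_union : (C ∪ D).ncard = k + 1

section SwapPath

variable [Finite V] {k : ℕ}

lemma IsSepSwap.ncard_symmDiff_union_left {C D : Set V} (h : IsSepSwap G u v k C D) :
    (symmDiff C (C ∪ D)).ncard = 1 := by
  rw [Set.ncard_symmDiff_of_subset Set.subset_union_left, h.ncard_union, h.ncard_left]
  omega

lemma IsSepSwap.ncard_symmDiff_union_right {C D : Set V} (h : IsSepSwap G u v k C D) :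
    (symmDiff (C ∪ D) D).ncard = 1 := by
  rw [symmDiff_comm, Set.ncard_symmDiff_of_subset Set.subset_union_right, h.ncard_union,
    h.ncard_right]
  omega

lemma IsSep.exists_isSepSwap_superset {A C : Set V} {x : V} (hA : IsSep G u v A)
    (hAk : A.ncard ≤ k) (hC : IsSep G u v C) (hCk : C.ncard = k) (hAC : A ⊆ insert x C) :
    ∃ C', IsSep G u v C' ∧ C'.ncard = k ∧ A ⊆ C' ∧ ReflTransGen (IsSepSwap G u v k) C C' := by
  by_cases hAC' : A ⊆ C
  · exact ⟨C, hC, hCk, hAC', .refl⟩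
  obtain ⟨a, haA, haC⟩ := Set.not_subset.mp hAC'
  obtain rfl : a = x := (Set.mem_insert_iff.mp (hAC haA)).resolve_right haC
  obtain ⟨y, hyC, hyA⟩ : ∃ y ∈ C, y ∉ A := by
    by_contra! hCA
    have : insert a C ⊆ A := Set.insert_subset haA hCA
    have := Set.ncard_le_ncard this
    rw [Set.ncard_insert_of_notMem haC] at this
    omega
  have hAC'' : A ⊆ insert a (C \ {y}) := fun b hb =>
    (Set.mem_insert_iff.mp (hAC hb)).imp_right fun hbC => ⟨hbC, fun hby => hyA (hby ▸ hb)⟩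
  have hC'sub : insert a (C \ {y}) ⊆ A ∪ C :=
    Set.insert_subset (.inl haA) (Set.sdiff_subset.trans Set.subset_union_right)
  have hC'sep : IsSep G u v (insert a (C \ {y})) :=
    hA.of_subset_of_subset (hA.union hC) hAC'' hC'sub
  have hC'k : (insert a (C \ {y})).ncard = k := by rw [Set.ncard_exchange haC hyC, hCk]
  refine ⟨_, hC'sep, hC'k, hAC'', .single ⟨hC, hC'sep, hCk, hC'k, ?_⟩⟩
  rw [Set.union_insert, Set.union_eq_self_of_subset_right Set.sdiff_subset,
    Set.ncard_insert_of_notMem haC, hCk]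

lemma IsTARStep.exists_isSepSwap_subset_insert {A A' C : Set V} {x : V}
    (hAA' : IsTARStep G u v k A A') (hC : IsSep G u v C) (hCk : C.ncard = k)
    (hAC : A ⊆ insert x C) :
    ∃ C' z, IsSep G u v C' ∧ C'.ncard = k ∧ A' ⊆ insert z C' ∧
      ReflTransGen (IsSepSwap G u v k) C C' := by
  by_cases hAk : A.ncard ≤ k
  · obtain ⟨C', hC', hC'k, hAC', hCC'⟩ :=
      hAA'.isSep_left.exists_isSepSwap_superset hAk hC hCk hAC
    obtain ⟨z, hz⟩ := Set.exists_subset_insert_of_ncard_symmDiff_eq_one hAA'.ncard_symmDiff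
    exact ⟨C', z, hC', hC'k, hz.trans (Set.insert_subset_insert hAC'), hCC'⟩
  · -- `A = C ∪ {x}` is as large as allowed, so the step deletes a vertex
    have hA'A : A' ⊆ A := Set.subset_of_ncard_symmDiff_eq_one hAA'.ncard_symmDiff (by
      have := hAA'.ncard_right_le
      omega)
    exact ⟨C, x, hC, hCk, hA'A.trans hAC, .refl⟩

lemma Relation.ReflTransGen.isSepSwap_of_isTARStep {A B C : Set V} {x : V}
    (h : ReflTransGen (IsTARStep G u v k) A B) (hB : IsSep G u v B) (hBk : B.ncard = k)
    (hC : IsSep G u v C) (hCk : C.ncard = k) (hAC : A ⊆ insert x C) :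
    ReflTransGen (IsSepSwap G u v k) C B := by
  induction h using Relation.ReflTransGen.head_induction_on generalizing C x with
  | refl =>
    obtain ⟨C', -, hC'k, hBC', hCC'⟩ := hB.exists_isSepSwap_superset hBk.le hC hCk hAC
    rwa [Set.eq_of_subset_of_ncard_le hBC' (by rw [hC'k, hBk])]
  | head hAA' _ ih =>
    obtain ⟨C', z, hC', hC'k, hA'C', hCC'⟩ := hAA'.exists_isSepSwap_subset_insert hC hCk hAC
    exact hCC'.trans (ih hC' hC'k hA'C')

end SwapPath

section Interleave

variable {k : ℕ}

def interleaveUnion (T : ℕ → Set V) (i : ℕ) : Set V :=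
  if Even i then T (i / 2) else T (i / 2) ∪ T (i / 2 + 1)

lemma interleaveUnion_two_mul (T : ℕ → Set V) (j : ℕ) : interleaveUnion T (2 * j) = T j := by
  simp [interleaveUnion]

lemma interleaveUnion_two_mul_add_one (T : ℕ → Set V) (j : ℕ) :
    interleaveUnion T (2 * j + 1) = T j ∪ T (j + 1) := by
  rw [interleaveUnion, if_neg (Nat.not_even_two_mul_add_one j),
    show (2 * j + 1) / 2 = j by omega]

lemma interleaveUnion_spec {m : ℕ} {T : ℕ → Set V}
    (hT : ∀ j < m, IsSepSwap G u v k (T j) (T (j + 1))) (hTm : IsSep G u v (T m))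
    (hTmk : (T m).ncard = k) {i : ℕ} (hi : i ≤ 2 * m) :
    IsSep G u v (interleaveUnion T i) ∧
      (interleaveUnion T i).ncard = if Even i then k else k + 1 := by
  obtain ⟨j, rfl | rfl⟩ := Nat.even_or_odd' i
  · rw [interleaveUnion_two_mul, if_pos (even_two_mul j)]
    rcases (show j < m ∨ j = m by omega) with hj | rfl
    · exact ⟨(hT j hj).isSep_left, (hT j hj).ncard_left⟩
    · exact ⟨hTm, hTmk⟩
  · have hj := hT j (by omega)
    rw [interleaveUnion_two_mul_add_one, if_neg (Nat.not_even_two_mul_add_one j)]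
    exact ⟨hj.isSep_left.union hj.isSep_right, hj.ncard_union⟩

lemma interleaveUnion_ncard_symmDiff [Finite V] {m : ℕ} {T : ℕ → Set V}
    (hT : ∀ j < m, IsSepSwap G u v k (T j) (T (j + 1))) {i : ℕ} (hi : i < 2 * m) :
    (symmDiff (interleaveUnion T i) (interleaveUnion T (i + 1))).ncard = 1 := by
  obtain ⟨j, rfl | rfl⟩ := Nat.even_or_odd' i
  · rw [interleaveUnion_two_mul, interleaveUnion_two_mul_add_one]
    exact (hT j (by omega)).ncard_symmDiff_union_left
  · rw [interleaveUnion_two_mul_add_one, show 2 * j + 1 + 1 = 2 * (j + 1) by ring,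
      interleaveUnion_two_mul]
    exact (hT j (by omega)).ncard_symmDiff_union_right

end Interleave

end Separators

theorem stmt13_general {V : Type*} [Fintype V] (G : SimpleGraph V) (u v : V)
    (k : ℕ) (Sa Sb : Set V)
    (hka : Sa.ncard = k) (hkb : Sb.ncard = k)
    (hex : ∃ (n : ℕ) (f : ℕ → Set V), f 0 = Sa ∧ f n = Sb ∧
      (∀ i ≤ n, IsSep G u v (f i) ∧ (f i).ncard ≤ k + 1) ∧
      (∀ i < n, (symmDiff (f i) (f (i + 1))).ncard = 1)) :
    ∃ (n : ℕ) (f : ℕ → Set V), f 0 = Sa ∧ f n = Sb ∧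
      (∀ i ≤ n, IsSep G u v (f i) ∧ (f i).ncard ≤ k + 1) ∧
      (∀ i < n, (symmDiff (f i) (f (i + 1))).ncard = 1) ∧
      (∀ i ≤ n, k ≤ (f i).ncard ∧
        (Even i → (f i).ncard = k) ∧ (¬ Even i → (f i).ncard = k + 1)) := by
  obtain ⟨n, f, rfl, rfl, hf, hstep⟩ := hex
  have hTAR : ReflTransGen (IsTARStep G u v k) (f 0) (f n) :=
    reflTransGen_of_forall_lt fun i hi =>
      ⟨(hf i hi.le).1, (hf (i + 1) hi).1, (hf i hi.le).2, (hf (i + 1) hi).2, hstep i hi⟩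
  have hSa := (hf 0 (Nat.zero_le n)).1
  have hSb := (hf n le_rfl).1
  obtain ⟨m, T, hT0, hTm, hT⟩ :=
    (hTAR.isSepSwap_of_isTARStep hSb hkb hSa hka (Set.subset_insert u _)).exists_forall_lt
  have hspec (i : ℕ) (hi : i ≤ 2 * m) := interleaveUnion_spec hT (hTm ▸ hSb) (hTm ▸ hkb) hi
  refine ⟨2 * m, interleaveUnion T, (interleaveUnion_two_mul T 0).trans hT0,
    by rw [interleaveUnion_two_mul, hTm], fun i hi => ?_,
    fun i hi => interleaveUnion_ncard_symmDiff hT hi, fun i hi => ?_⟩ <;>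
  · obtain ⟨hsep, hcard⟩ := hspec i hi
    split_ifs at hcard with heven <;> simp [hsep, hcard, heven]

/-- If `Sa, Sb` are `uv`-separators of size `k` joined by a `(k+1)`-TAR
sequence, then they are joined by a `(k+1)`-TAR sequence whose states have size
exactly `k` at even positions (odd positions in 1-based indexing) and exactly
`k+1` at odd positions. -/
theorem stmt13 {V : Type*} [Fintype V] (G : SimpleGraph V) (u v : V)
    (huv : ¬ G.Adj u v) (k : ℕ) (Sa Sb : Set V)
    (hSa : IsSep G u v Sa) (hSb : IsSep G u v Sb)
    (hka : Sa.ncard = k) (hkb : Sb.ncard = k)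
    (hex : ∃ (n : ℕ) (f : ℕ → Set V), f 0 = Sa ∧ f n = Sb ∧
      (∀ i ≤ n, IsSep G u v (f i) ∧ (f i).ncard ≤ k + 1) ∧
      (∀ i < n, (symmDiff (f i) (f (i + 1))).ncard = 1)) :
    ∃ (n : ℕ) (f : ℕ → Set V), f 0 = Sa ∧ f n = Sb ∧
      (∀ i ≤ n, IsSep G u v (f i) ∧ (f i).ncard ≤ k + 1) ∧
      (∀ i < n, (symmDiff (f i) (f (i + 1))).ncard = 1) ∧
      (∀ i ≤ n, k ≤ (f i).ncard ∧
        (Even i → (f i).ncard = k) ∧ (¬ Even i → (f i).ncard = k + 1)) :=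
  stmt13_general G u v k Sa Sb hka hkb hex
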